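/- arXiv:1612.03024 — 2 statements merged into one kernel-verified Lean document; each statement's English description precedes it below -/
import Mathlib

section
/- Let n ≥ 1 be a natural number and d₂ > 0. The function ε₂ ↦ (n/(2d₂) + 1/ε₂)/(d₂ − ε₂) on (0, d₂) attains its minimum value [n/((√(2n+4) − 2)·d₂)]² at ε₂ = ((√(2n+4) − 2)/n)·d₂. -/
open Set Real

/-! Put `a = √(2n+4) − 2`, so that `a² + 4a = 2n`. With this relation, clearing denominators in
`(n/(2d) + 1/ε)/(d − ε) − (n/(a d))²` leaves `2 d (n ε − a d)²` over a positive quantity, which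
vanishes exactly at `ε = a d / n`. -/

section

variable {a c d ε : ℝ}

theorem sq_add_four_mul_sqrt_sub_two (hc : -2 ≤ c) :
    (√(2 * c + 4) - 2) ^ 2 + 4 * (√(2 * c + 4) - 2) = 2 * c := by
  have h := Real.sq_sqrt (by linarith : (0 : ℝ) ≤ 2 * c + 4)
  linear_combination h

theorem sqrt_two_mul_add_four_sub_two_pos (hc : 0 < c) : 0 < √(2 * c + 4) - 2 := by
  have : 2 < √(2 * c + 4) := (Real.lt_sqrt zero_le_two).2 (by linarith)
  linarith

theorem lt_of_sq_add_four_mul_eq (ha : 0 < a) (hac : a ^ 2 + 4 * a = 2 * c) : a < c := by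
  nlinarith

theorem div_mul_mem_Ioo (ha : 0 < a) (hac : a ^ 2 + 4 * a = 2 * c) (hd : 0 < d) :
    a / c * d ∈ Ioo 0 d := by
  have hlt := lt_of_sq_add_four_mul_eq ha hac
  have hc : 0 < c := ha.trans hlt
  refine ⟨by positivity, ?_⟩
  calc a / c * d < 1 * d := by gcongr; exact (div_lt_one hc).2 hlt
    _ = d := one_mul d

theorem coeff_eq_at_div_mul (ha : 0 < a) (hac : a ^ 2 + 4 * a = 2 * c) (hd : 0 < d) :
    (c / (2 * d) + 1 / (a / c * d)) / (d - a / c * d) = (c / (a * d)) ^ 2 := by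
  have hlt := lt_of_sq_add_four_mul_eq ha hac
  have hca : c - a ≠ 0 := (sub_pos.2 hlt).ne'
  have hc : c ≠ 0 := (ha.trans hlt).ne'
  field_simp
  linear_combination hac

theorem sq_div_le_coeff (ha : 0 < a) (hac : a ^ 2 + 4 * a = 2 * c) (hε : ε ∈ Ioo 0 d) :
    (c / (a * d)) ^ 2 ≤ (c / (2 * d) + 1 / ε) / (d - ε) := by
  obtain ⟨hε0, hεd⟩ := hε
  have hd : 0 < d := hε0.trans hεd
  have hdε : 0 < d - ε := sub_pos.2 hεd
  rw [div_add_div _ _ (by positivity) hε0.ne', div_div, div_pow,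
    div_le_div_iff₀ (by positivity) (by positivity)]
  have key : (c * ε + 2 * d) * (a * d) ^ 2 - c ^ 2 * (2 * d * ε * (d - ε))
      = 2 * d * (c * ε - a * d) ^ 2 := by
    linear_combination (c * d ^ 2 * ε) * hac
  nlinarith [key, mul_nonneg hd.le (sq_nonneg (c * ε - a * d))]

end

/-- For an integer `n ≥ 1` and `d₂ > 0`, the function
`ε₂ ↦ (n/(2d₂) + 1/ε₂)/(d₂ − ε₂)` on `(0, d₂)` attains its minimum value
`(n/((√(2n+4) − 2)·d₂))²` at `ε₂ = ((√(2n+4) − 2)/n)·d₂`. -/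
theorem eps2_optimization (n : ℕ) (hn : 1 ≤ n) (d₂ : ℝ) (hd₂ : 0 < d₂) :
    ((Real.sqrt (2 * n + 4) - 2) / n) * d₂ ∈ Ioo (0 : ℝ) d₂ ∧
    (((n : ℝ) / (2 * d₂) + 1 / (((Real.sqrt (2 * n + 4) - 2) / n) * d₂)) /
        (d₂ - ((Real.sqrt (2 * n + 4) - 2) / n) * d₂)
      = ((n : ℝ) / ((Real.sqrt (2 * n + 4) - 2) * d₂)) ^ 2) ∧
    ∀ ε₂ ∈ Ioo (0 : ℝ) d₂,
      ((n : ℝ) / ((Real.sqrt (2 * n + 4) - 2) * d₂)) ^ 2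
        ≤ ((n : ℝ) / (2 * d₂) + 1 / ε₂) / (d₂ - ε₂) := by
  have hn_pos : (0 : ℝ) < n := by exact_mod_cast hn
  have ha := sqrt_two_mul_add_four_sub_two_pos hn_pos
  have hac := sq_add_four_mul_sqrt_sub_two (by linarith : (-2 : ℝ) ≤ n)
  exact ⟨div_mul_mem_Ioo ha hac hd₂, coeff_eq_at_div_mul ha hac hd₂,
    fun ε₂ hε₂ => sq_div_le_coeff ha hac hε₂⟩
end

section
/- Let n ≥ 1, d₁, d₂ > 0, α > 0, χ ∈ ℝ. Then the infimum over ε₁ ∈ (0,d₁), ε₂ ∈ (0,d₂), ε₃ > 0, ε₄ > 0 of the quantity χ²/(4ε₃) + 2(n/(2d₂) + 1/ε₂)α²·(ε₃+ε₄)/(2(d₂−ε₂)) + (χ²/(2ε₁))·((d₁+d₂)²/(4ε₄))/(2(d₁−ε₁)) equals (n/(√(2n+4) − 2))·(1/d₁ + 2/d₂)·α·|χ|. -/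
open Set Real

/-!
Write `s = √(2n+4)`, so that `n / (s - 2) = (s + 2) / 2`. The second term of the quantity is
`α² (n/(2d₂) + 1/ε₂)/(d₂ - ε₂) · (ε₃ + ε₄)` and the third is `(χ(d₁+d₂)/4)² / (ε₁(d₁ - ε₁) ε₄)`.
Minimising first in `ε₂` and `ε₁` (the minima are `((s+2)/(2d₂))²`, at `ε₂ = 2d₂/(s+2)`, and
`4/d₁²`, at `ε₁ = d₁/2`) leaves `χ²/(4ε₃) + b²(ε₃ + ε₄) + c²/ε₄` with `b = α(s+2)/(2d₂)` and
`c = |χ|(d₁+d₂)/(2d₁)`, which AM-GM bounds below by `b|χ| + 2bc`, the claimed value. For `χ ≠ 0`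
the bound is attained; in general it is approached by moving `ε₃, ε₄` slightly away from the
AM-GM optimum, which also covers `χ = 0`, where that optimum lies on the boundary.
-/

theorem two_mul_mul_le_sq_mul_add_sq_div (p q : ℝ) {t : ℝ} (ht : 0 < t) :
    2 * p * q ≤ p ^ 2 * t + q ^ 2 / t := by
  have gap : p ^ 2 * t + q ^ 2 / t - 2 * p * q = (p * t - q) ^ 2 / t := by
    field_simp
    ring
  have : 0 ≤ (p * t - q) ^ 2 / t := by positivity
  linarith

theorem sq_mul_div_add_sq_div_div_le {p q r : ℝ} (hp : 0 < p) (hr : 0 < r) (hq : |q| ≤ r) :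
    p ^ 2 * (r / p) + q ^ 2 / (r / p) ≤ 2 * p * r := by
  have hq2 : q ^ 2 ≤ r ^ 2 := sq_le_sq' (abs_le.mp hq).1 (abs_le.mp hq).2
  calc p ^ 2 * (r / p) + q ^ 2 / (r / p) = p * r + p * (q ^ 2 / r) := by
        field_simp
    _ ≤ p * r + p * r := by
        gcongr
        rw [div_le_iff₀ hr]
        nlinarith
    _ = 2 * p * r := by ring

theorem four_div_sq_le_one_div_mul_sub {ε d : ℝ} (hε : 0 < ε) (hεd : ε < d) :
    4 / d ^ 2 ≤ 1 / (ε * (d - ε)) := by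
  have hd : 0 < d := hε.trans hεd
  have hdε : 0 < d - ε := sub_pos.mpr hεd
  rw [div_le_div_iff₀ (by positivity) (mul_pos hε hdε)]
  nlinarith [sq_nonneg (d - 2 * ε)]

section QuadraticRate

variable {m s d ε : ℝ}

theorem sq_add_two_div_le (hs : s ^ 2 = 2 * m + 4) (hε : 0 < ε) (hεd : ε < d) :
    ((s + 2) / (2 * d)) ^ 2 ≤ (m / (2 * d) + 1 / ε) / (d - ε) := by
  have hd : 0 < d := hε.trans hεd
  have hdε : 0 < d - ε := sub_pos.mpr hεd
  have gap : (m / (2 * d) + 1 / ε) / (d - ε) - ((s + 2) / (2 * d)) ^ 2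
      = (2 * d - (s + 2) * ε) ^ 2 / (4 * d ^ 2 * ε * (d - ε)) := by
    rw [show m = (s ^ 2 - 4) / 2 by linarith]
    field_simp
    ring
  have : 0 ≤ (2 * d - (s + 2) * ε) ^ 2 / (4 * d ^ 2 * ε * (d - ε)) := by positivity
  linarith

theorem sq_add_two_div_eq (hs : s ^ 2 = 2 * m + 4) (hs0 : 0 < s) (hd : d ≠ 0) :
    (m / (2 * d) + 1 / (2 * d / (s + 2))) / (d - 2 * d / (s + 2)) = ((s + 2) / (2 * d)) ^ 2 := by
  have hs2 : s + 2 ≠ 0 := by positivity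
  have hm : m = (s ^ 2 - 4) / 2 := by linarith
  have hds : d - 2 * d / (s + 2) = d * s / (s + 2) := by field_simp; ring
  rw [hds, hm]
  field_simp
  ring

end QuadraticRate

theorem div_sqrt_sub_two {m : ℝ} (hm : 0 < m) :
    m / (√(2 * m + 4) - 2) = (√(2 * m + 4) + 2) / 2 := by
  have hs : √(2 * m + 4) ^ 2 = 2 * m + 4 := sq_sqrt (by positivity)
  have hs2 : 2 < √(2 * m + 4) := (lt_sqrt zero_le_two).mpr (by linarith)
  rw [div_eq_div_iff (by linarith) two_ne_zero]
  nlinarith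

noncomputable def dampingThreshold (m d₁ d₂ α χ ε₁ ε₂ ε₃ ε₄ : ℝ) : ℝ :=
  χ ^ 2 / (4 * ε₃) + 2 * (m / (2 * d₂) + 1 / ε₂) * α ^ 2 * (ε₃ + ε₄) / (2 * (d₂ - ε₂))
    + (χ ^ 2 / (2 * ε₁)) * ((d₁ + d₂) ^ 2 / (4 * ε₄)) / (2 * (d₁ - ε₁))

section DampingThreshold

variable {m d₁ d₂ α χ ε₁ ε₂ ε₃ ε₄ : ℝ}

theorem dampingThreshold_eq : dampingThreshold m d₁ d₂ α χ ε₁ ε₂ ε₃ ε₄ =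
    (|χ| / 2) ^ 2 / ε₃ + α ^ 2 * ((m / (2 * d₂) + 1 / ε₂) / (d₂ - ε₂)) * (ε₃ + ε₄)
      + (|χ| * (d₁ + d₂) / 4) ^ 2 * (1 / (ε₁ * (d₁ - ε₁))) / ε₄ := by
  simp only [dampingThreshold, mul_pow, sq_abs, div_eq_mul_inv, mul_inv]
  ring

theorem le_dampingThreshold (hm : -2 ≤ m) (hε₁ : ε₁ ∈ Ioo 0 d₁)
    (hε₂ : ε₂ ∈ Ioo 0 d₂) (hε₃ : 0 < ε₃) (hε₄ : 0 < ε₄) :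
    (√(2 * m + 4) + 2) / 2 * (1 / d₁ + 2 / d₂) * α * |χ|
      ≤ dampingThreshold m d₁ d₂ α χ ε₁ ε₂ ε₃ ε₄ := by
  set s := √(2 * m + 4)
  have hs : s ^ 2 = 2 * m + 4 := sq_sqrt (by linarith)
  have hd₁ : d₁ ≠ 0 := (hε₁.1.trans hε₁.2).ne'
  have hd₂ : d₂ ≠ 0 := (hε₂.1.trans hε₂.2).ne'
  set b := α * ((s + 2) / (2 * d₂))
  set c := |χ| * (d₁ + d₂) / (2 * d₁)
  have hb : b ^ 2 * (ε₃ + ε₄) ≤ α ^ 2 * ((m / (2 * d₂) + 1 / ε₂) / (d₂ - ε₂)) * (ε₃ + ε₄) := by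
    rw [mul_pow]
    gcongr
    exact sq_add_two_div_le hs hε₂.1 hε₂.2
  have hc : c ^ 2 / ε₄ ≤ (|χ| * (d₁ + d₂) / 4) ^ 2 * (1 / (ε₁ * (d₁ - ε₁))) / ε₄ := by
    rw [show c ^ 2 = (|χ| * (d₁ + d₂) / 4) ^ 2 * (4 / d₁ ^ 2) by simp only [c]; field_simp; ring]
    exact div_le_div_of_nonneg_right (mul_le_mul_of_nonneg_left
      (four_div_sq_le_one_div_mul_sub hε₁.1 hε₁.2) (sq_nonneg _)) hε₄.le
  calc (s + 2) / 2 * (1 / d₁ + 2 / d₂) * α * |χ| = 2 * b * (|χ| / 2) + 2 * b * c := by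
        simp only [b, c]
        field_simp
        ring
    _ ≤ (b ^ 2 * ε₃ + (|χ| / 2) ^ 2 / ε₃) + (b ^ 2 * ε₄ + c ^ 2 / ε₄) :=
        add_le_add (two_mul_mul_le_sq_mul_add_sq_div _ _ hε₃)
          (two_mul_mul_le_sq_mul_add_sq_div _ _ hε₄)
    _ ≤ dampingThreshold m d₁ d₂ α χ ε₁ ε₂ ε₃ ε₄ := by
        rw [dampingThreshold_eq]
        linarith

theorem exists_dampingThreshold_le (hm : -2 < m) (hd₁ : 0 < d₁) (hd₂ : 0 < d₂) (hα : 0 < α)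
    {t : ℝ} (ht : 0 < t) :
    ∃ ε₁ ∈ Ioo 0 d₁, ∃ ε₂ ∈ Ioo 0 d₂, ∃ ε₃ > 0, ∃ ε₄ > 0,
      dampingThreshold m d₁ d₂ α χ ε₁ ε₂ ε₃ ε₄
        ≤ (√(2 * m + 4) + 2) / 2 * (1 / d₁ + 2 / d₂) * α * |χ| + t := by
  set s := √(2 * m + 4)
  have hs : s ^ 2 = 2 * m + 4 := sq_sqrt (by linarith)
  have hs0 : 0 < s := sqrt_pos.mpr (by linarith)
  set b := α * ((s + 2) / (2 * d₂))
  set c := |χ| * (d₁ + d₂) / (2 * d₁)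
  have hb : 0 < b := by positivity
  set δ := t / (4 * b)
  have hδ : 0 < δ := div_pos ht (by positivity)
  have hε₂ : 2 * d₂ / (s + 2) < d₂ := by
    rw [div_lt_iff₀ (by positivity)]
    nlinarith
  refine ⟨d₁ / 2, ⟨by positivity, by linarith⟩, 2 * d₂ / (s + 2), ⟨by positivity, hε₂⟩,
    (|χ| / 2 + δ) / b, by positivity, (c + δ) / b, by positivity, ?_⟩
  have hRate : α ^ 2 * ((m / (2 * d₂) + 1 / (2 * d₂ / (s + 2))) / (d₂ - 2 * d₂ / (s + 2)))
      = b ^ 2 := by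
    rw [sq_add_two_div_eq hs hs0 hd₂.ne', mul_pow]
  have hHalf : (|χ| * (d₁ + d₂) / 4) ^ 2 * (1 / (d₁ / 2 * (d₁ - d₁ / 2))) = c ^ 2 := by
    simp only [c]
    field_simp
    ring
  have h₃ := sq_mul_div_add_sq_div_div_le hb (by positivity : 0 < |χ| / 2 + δ)
    (show |(|χ| / 2)| ≤ |χ| / 2 + δ by rw [abs_of_nonneg (by positivity)]; linarith)
  have h₄ := sq_mul_div_add_sq_div_div_le hb (by positivity : 0 < c + δ)
    (show |c| ≤ c + δ by rw [abs_of_nonneg (by positivity)]; linarith)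
  rw [dampingThreshold_eq, hRate, hHalf]
  calc _ = (b ^ 2 * ((|χ| / 2 + δ) / b) + (|χ| / 2) ^ 2 / ((|χ| / 2 + δ) / b))
        + (b ^ 2 * ((c + δ) / b) + c ^ 2 / ((c + δ) / b)) := by ring
    _ ≤ 2 * b * (|χ| / 2 + δ) + 2 * b * (c + δ) := add_le_add h₃ h₄
    _ = (s + 2) / 2 * (1 / d₁ + 2 / d₂) * α * |χ| + t := by
        simp only [δ, b, c]
        field_simp
        ring

theorem isGLB_dampingThreshold (hm : -2 < m) (hd₁ : 0 < d₁) (hd₂ : 0 < d₂) (hα : 0 < α) :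
    IsGLB {y | ∃ ε₁ ∈ Ioo 0 d₁, ∃ ε₂ ∈ Ioo 0 d₂, ∃ ε₃ > 0, ∃ ε₄ > 0,
        y = dampingThreshold m d₁ d₂ α χ ε₁ ε₂ ε₃ ε₄}
      ((√(2 * m + 4) + 2) / 2 * (1 / d₁ + 2 / d₂) * α * |χ|) := by
  refine ⟨?_, fun w hw => le_of_forall_pos_le_add fun t ht => ?_⟩
  · rintro _ ⟨ε₁, hε₁, ε₂, hε₂, ε₃, hε₃, ε₄, hε₄, rfl⟩
    exact le_dampingThreshold hm.le hε₁ hε₂ hε₃ hε₄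
  · obtain ⟨ε₁, hε₁, ε₂, hε₂, ε₃, hε₃, ε₄, hε₄, hle⟩ :=
      exists_dampingThreshold_le (χ := χ) hm hd₁ hd₂ hα ht
    exact (hw ⟨ε₁, hε₁, ε₂, hε₂, ε₃, hε₃, ε₄, hε₄, rfl⟩).trans hle

end DampingThreshold

/-- The infimum over admissible `ε₁, ε₂, ε₃, ε₄` of the quantity appearing in the
blow-up prevention estimate equals `(n/(√(2n+4) − 2))·(1/d₁ + 2/d₂)·α·|χ|`. -/
theorem mu0_infimum (n : ℕ) (hn : 1 ≤ n) (d₁ d₂ α : ℝ) (hd₁ : 0 < d₁)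
    (hd₂ : 0 < d₂) (hα : 0 < α) (χ : ℝ) :
    sInf {y : ℝ | ∃ ε₁ ∈ Ioo (0 : ℝ) d₁, ∃ ε₂ ∈ Ioo (0 : ℝ) d₂,
        ∃ ε₃ > (0 : ℝ), ∃ ε₄ > (0 : ℝ),
        y = χ ^ 2 / (4 * ε₃)
          + 2 * ((n : ℝ) / (2 * d₂) + 1 / ε₂) * α ^ 2 * (ε₃ + ε₄) / (2 * (d₂ - ε₂))
          + (χ ^ 2 / (2 * ε₁)) * ((d₁ + d₂) ^ 2 / (4 * ε₄)) / (2 * (d₁ - ε₁))}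
      = ((n : ℝ) / (Real.sqrt (2 * n + 4) - 2)) * (1 / d₁ + 2 / d₂) * α * |χ| := by
  have hn' : (0 : ℝ) < n := Nat.cast_pos.mpr hn
  have hm : (-2 : ℝ) < n := by linarith
  obtain ⟨ε₁, hε₁, ε₂, hε₂, ε₃, hε₃, ε₄, hε₄, -⟩ :=
    exists_dampingThreshold_le (χ := χ) hm hd₁ hd₂ hα one_pos
  rw [div_sqrt_sub_two hn']
  exact (isGLB_dampingThreshold hm hd₁ hd₂ hα).csInf_eq
    ⟨_, ε₁, hε₁, ε₂, hε₂, ε₃, hε₃, ε₄, hε₄, rfl⟩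
end
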